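/- arXiv:2401.10340 — 4 statements merged into one kernel-verified Lean document; each statement's English description precedes it below -/
import Mathlib

section
/- Let A be a connected Γ-graded bialgebra over a field k, where Γ is a discrete submonoid of the half-plane {(r,d) ∈ ℝ² : r > 0, or r = 0 and d ≥ 0}, and connectedness means A⁰ = k. For a homogeneous element a ∈ A, write Δ(a) = Σᵢ₌₁ⁿ bᵢ ⊗ cᵢ with each bᵢ, cᵢ homogeneous and n minimal. Then for every i ∈ {1,…,n}, the set L(bᵢ) is contained in L(a) and the set R(cᵢ) is contained in R(a), where L(x) (resp. R(x)) denotes the set of degrees β (resp. γ) such that Δ(x) has a nonzero component in A^β ⊗ A^γ. -/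
open scoped TensorProduct
open TensorProduct

noncomputable section

namespace MVPaper

variable {k A : Type} [Field k] [Ring A] [Bialgebra k A]
variable {ι : Type} [AddCommMonoid ι] [DecidableEq ι]
variable (𝒜 : ι → Submodule k A) [DirectSum.Decomposition 𝒜]

/-- The projection of `A` onto its degree-`γ` homogeneous component. -/
def proj (γ : ι) : A →ₗ[k] A :=
  (𝒜 γ).subtype ∘ₗ (DirectSum.component k ι (fun i => 𝒜 i) γ) ∘ₗ
    (DirectSum.decomposeLinearEquiv 𝒜).toLinearMap

/-- The projection of `A ⊗ A` onto its bidegree-`(β, γ)` homogeneous component. -/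
def projT (β γ : ι) : A ⊗[k] A →ₗ[k] A ⊗[k] A :=
  TensorProduct.map (proj 𝒜 β) (proj 𝒜 γ)

/-- `L(a)`: the set of left degrees appearing in the coproduct of `a`. -/
def Lset (a : A) : Set ι :=
  {β | ∃ γ, projT 𝒜 β γ (Coalgebra.comul (R := k) a) ≠ 0}

/-- `R(a)`: the set of right degrees appearing in the coproduct of `a`. -/
def Rset (a : A) : Set ι :=
  {γ | ∃ β, projT 𝒜 β γ (Coalgebra.comul (R := k) a) ≠ 0}

/-- The coproduct respects the grading. -/
def ComulGraded : Prop :=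
  ∀ (γ : ι), ∀ a ∈ 𝒜 γ, ∀ β δ : ι, β + δ ≠ γ →
    projT 𝒜 β δ (Coalgebra.comul (R := k) a) = 0

/-- The coproduct of any element is the (finite) sum of its homogeneous components. -/
def ComulDecomposes : Prop :=
  ∀ a : A, ∃ S : Finset (ι × ι),
    Coalgebra.comul (R := k) a = ∑ p ∈ S, projT 𝒜 p.1 p.2 (Coalgebra.comul (R := k) a)

/-- Connectedness: the degree-`0` component is spanned by the unit. -/
def GradedConnected : Prop := 𝒜 0 = Submodule.span k {(1 : A)}

end MVPaper

namespace MVPaper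

variable {k A : Type} [Field k] [Ring A] [Bialgebra k A]
variable {Γ : AddSubmonoid (ℝ × ℝ)} [DecidableEq Γ]
variable (𝒜 : Γ → Submodule k A) [DirectSum.Decomposition 𝒜]

/-- `Γ` is contained in the right half-plane. -/
def HalfPlane (Γ : AddSubmonoid (ℝ × ℝ)) : Prop :=
  ∀ γ ∈ Γ, 0 < γ.1 ∨ (γ.1 = 0 ∧ 0 ≤ γ.2)

/-- The slope `d/r` of a point `(r, d)` of the right half-plane, with `∞` for `r = 0`. -/
def slope (v : ℝ × ℝ) : WithTop ℝ :=
  if v.1 = 0 then ⊤ else (v.2 / v.1 : ℝ)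

/-- Membership in `Γ_μ`. -/
def memSlope (μ : WithTop ℝ) (γ : Γ) : Prop :=
  (γ : ℝ × ℝ) = 0 ∨ slope (γ : ℝ × ℝ) = μ

/-- Membership in `Γ_{≤μ}`. -/
def memSlopeLE (μ : WithTop ℝ) (γ : Γ) : Prop :=
  (γ : ℝ × ℝ) = 0 ∨ slope (γ : ℝ × ℝ) ≤ μ

/-- Membership in `Γ_{≥μ}`. -/
def memSlopeGE (μ : WithTop ℝ) (γ : Γ) : Prop :=
  (γ : ℝ × ℝ) = 0 ∨ μ ≤ slope (γ : ℝ × ℝ)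

/-- `a` is a homogeneous semistable element of slope `μ` and degree `γ`. -/
def IsSemistableAt (μ : WithTop ℝ) (γ : Γ) (a : A) : Prop :=
  a ∈ 𝒜 γ ∧ memSlope μ γ ∧ ∀ β ∈ Lset 𝒜 a, memSlopeLE μ β

/-- `a` is a homogeneous semistable element of slope `μ`. -/
def IsSemistable (μ : WithTop ℝ) (a : A) : Prop :=
  ∃ γ : Γ, IsSemistableAt 𝒜 μ γ a

/-- `A_μ`: the span of the homogeneous elements of slope `μ`. -/
def Aslope (μ : WithTop ℝ) : Submodule k A :=
  ⨆ γ ∈ {γ : Γ | memSlope μ γ}, 𝒜 γ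

/-- `A_{[μ]}`: the span of the semistable elements of slope `μ`. -/
def Asemi (μ : WithTop ℝ) : Submodule k A :=
  Submodule.span k {a : A | IsSemistable 𝒜 μ a}

open Classical in
/-- The projection `p_μ : A → A_μ`. -/
def pSlope (μ : WithTop ℝ) : A →ₗ[k] A :=
  (DirectSum.toModule k Γ A fun γ => if memSlope μ γ then (𝒜 γ).subtype else 0) ∘ₗ
    (DirectSum.decomposeLinearEquiv 𝒜).toLinearMap

/-- Ordered monomials whose factors have slopes in `J`: products of homogeneous
semistable elements of nonzero degree, with weakly decreasing slopes. -/
def IsOrderedMonomialIn (J : Set (WithTop ℝ)) (a : A) : Prop :=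
  ∃ (p : ℕ) (g : Fin p → A) (γ : Fin p → Γ) (μ : Fin p → WithTop ℝ),
    (∀ i, IsSemistableAt 𝒜 (μ i) (γ i) (g i)) ∧
    (∀ i, (γ i : ℝ × ℝ) ≠ 0) ∧ (∀ i, μ i ∈ J) ∧
    Antitone μ ∧ a = (List.ofFn g).prod

/-- Ordered monomials. -/
def IsOrderedMonomial (a : A) : Prop :=
  IsOrderedMonomialIn 𝒜 Set.univ a

/-- The points of `L(a)`, viewed in `ℝ²`. -/
def Lpts (a : A) : Set (ℝ × ℝ) :=
  (fun γ : Γ => (γ : ℝ × ℝ)) '' Lset 𝒜 a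

/-- The polytope `Pol(a)`: the convex hull of `L(a)` in `ℝ²`. -/
def Pol (a : A) : Set (ℝ × ℝ) :=
  convexHull ℝ (Lpts 𝒜 a)

/-- `Pol^∧(a)` for `a` of degree `γ`: the region between the upper rim of `Pol(a)`
and the straight segment from `0` to `γ`. -/
def PolWedge (a : A) (γ : Γ) : Set (ℝ × ℝ) :=
  {p | (∃ t ∈ Set.Icc (0 : ℝ) 1,
          p.1 = t * (γ : ℝ × ℝ).1 ∧ t * (γ : ℝ × ℝ).2 ≤ p.2) ∧
       (∃ q ∈ Pol 𝒜 a, q.1 = p.1 ∧ p.2 ≤ q.2)}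

end MVPaper

/-!
In a minimal homogeneous writing `Δa = ∑ bⱼ ⊗ cⱼ`, the right factors `cⱼ` of a fixed left degree
are linearly independent (and symmetrically for the left factors), since a linear relation would
let one term be absorbed into the others. Now let `β ∈ L(bᵢ)`, witnessed by the bidegree `(β, τ)`.
Projecting `(Δ ⊗ id)Δa = ∑ Δbⱼ ⊗ cⱼ` to bidegree `(β, τ)` in the first two factors leaves, by the
grading, only the terms with `|bⱼ| = |bᵢ|`, and the independence of these `cⱼ` keeps the result
nonzero. By coassociativity the same element is obtained from `(id ⊗ Δ)Δa = ∑ bⱼ ⊗ Δcⱼ` after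
projecting the first factor to degree `β`; hence that projection of `Δa` is nonzero, i.e.
`β ∈ L(a)`. The inclusion `R(cᵢ) ⊆ R(a)` is the mirror image.
-/

namespace MVPaper

open LinearMap

section Writing

variable {k A : Type} [Field k] [Ring A] [Bialgebra k A]
variable {ι : Type} (𝒜 : ι → Submodule k A)

def HasHomogeneousWriting (x : A ⊗[k] A) (m : ℕ) : Prop :=
  ∃ (b c : Fin m → A) (β δ : Fin m → ι),
    (∀ i, b i ∈ 𝒜 (β i)) ∧ (∀ i, c i ∈ 𝒜 (δ i)) ∧ x = ∑ i, b i ⊗ₜ[k] c i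

variable {𝒜}

lemma HasHomogeneousWriting.comm {x : A ⊗[k] A} {m : ℕ} (h : HasHomogeneousWriting 𝒜 x m) :
    HasHomogeneousWriting 𝒜 (TensorProduct.comm k A A x) m := by
  obtain ⟨b, c, β, δ, hb, hc, rfl⟩ := h
  exact ⟨c, b, δ, β, hc, hb, by simp [map_sum]⟩

/-- Replacing `b j` by `b j - (lam j / lam i₀) • b i₀` keeps the sum and kills the `i₀`-th term. -/
lemma hasHomogeneousWriting_of_right_dependent {m : ℕ} {b c : Fin (m + 1) → A}
    {β δ : Fin (m + 1) → ι} {x : A ⊗[k] A} (hb : ∀ i, b i ∈ 𝒜 (β i))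
    (hc : ∀ i, c i ∈ 𝒜 (δ i)) (hx : x = ∑ i, b i ⊗ₜ[k] c i) {lam : Fin (m + 1) → k}
    (hdep : ∑ j, lam j • c j = 0) {i₀ : Fin (m + 1)} (hi₀ : lam i₀ ≠ 0)
    (hβ : ∀ j, lam j ≠ 0 → β j = β i₀) :
    HasHomogeneousWriting 𝒜 x m := by
  set b' : Fin (m + 1) → A := fun j => b j - (lam j / lam i₀) • b i₀
  have hb' : ∀ j, b' j ∈ 𝒜 (β j) := by
    intro j
    by_cases h : lam j = 0
    · simpa [b', h] using hb j
    · exact sub_mem (hb j) (hβ j h ▸ Submodule.smul_mem _ _ (hb i₀))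
  have hx' : x = ∑ j, b' j ⊗ₜ[k] c j := by
    have : ∑ j, ((lam j / lam i₀) • b i₀) ⊗ₜ[k] c j = 0 := by
      simp_rw [smul_tmul, ← tmul_sum, div_eq_inv_mul, mul_smul, ← Finset.smul_sum, hdep,
        smul_zero, tmul_zero]
    simp [b', sub_tmul, Finset.sum_sub_distrib, this, hx]
  refine ⟨fun j => b' (i₀.succAbove j), fun j => c (i₀.succAbove j),
    fun j => β (i₀.succAbove j), fun j => δ (i₀.succAbove j),
    fun j => hb' _, fun j => hc _, ?_⟩
  rw [hx', Fin.sum_univ_succAbove _ i₀]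
  simp [b', hi₀]

lemma linearIndepOn_right_of_minimal {n : ℕ} {b c : Fin n → A} {β δ : Fin n → ι}
    {x : A ⊗[k] A} (hb : ∀ i, b i ∈ 𝒜 (β i)) (hc : ∀ i, c i ∈ 𝒜 (δ i))
    (hx : x = ∑ i, b i ⊗ₜ[k] c i) (hmin : ∀ m < n, ¬ HasHomogeneousWriting 𝒜 x m) (β₀ : ι) :
    LinearIndepOn k c {j | β j = β₀} := by
  rw [linearIndepOn_iff'']
  intro t g hts hg hdep i₀ hi₀
  by_contra hne
  obtain ⟨m, rfl⟩ : ∃ m, n = m + 1 := Nat.exists_eq_add_one.mpr i₀.pos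
  have hsupp : ∀ j, g j ≠ 0 → β j = β₀ := fun j hj => hts (by_contra fun h => hj (hg j h))
  refine hmin m m.lt_add_one (hasHomogeneousWriting_of_right_dependent hb hc hx ?_ hne
    fun j hj => (hsupp j hj).trans (hsupp i₀ hne).symm)
  rwa [← Finset.sum_subset t.subset_univ fun j _ hj => by simp [hg j hj]]

lemma linearIndepOn_left_of_minimal {n : ℕ} {b c : Fin n → A} {β δ : Fin n → ι}
    {x : A ⊗[k] A} (hb : ∀ i, b i ∈ 𝒜 (β i)) (hc : ∀ i, c i ∈ 𝒜 (δ i))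
    (hx : x = ∑ i, b i ⊗ₜ[k] c i) (hmin : ∀ m < n, ¬ HasHomogeneousWriting 𝒜 x m) (δ₀ : ι) :
    LinearIndepOn k b {j | δ j = δ₀} := by
  refine linearIndepOn_right_of_minimal hc hb (x := TensorProduct.comm k A A x)
    (by simp [hx, map_sum]) (fun m hm h => hmin m hm ?_) δ₀
  simpa using h.comm

end Writing

lemma sum_tmul_ne_zero_of_linearIndepOn_right {k M N η : Type} [Field k] [AddCommGroup M]
    [Module k M] [AddCommGroup N] [Module k N] {s : Finset η} {c : η → N} (hc : LinearIndepOn k c s)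
    (t : η → M) {i : η} (hi : i ∈ s) (ht : t i ≠ 0) :
    ∑ j ∈ s, t j ⊗ₜ[k] c j ≠ 0 := by
  obtain ⟨f, hfi, hf⟩ :=
    Submodule.exists_dual_map_eq_bot_of_notMem (hc.notMem_span hi) inferInstance
  have hfj : ∀ j ∈ s, j ≠ i → f (c j) = 0 := fun j hj hji =>
    (Submodule.eq_bot_iff _).mp hf _
      (Submodule.mem_map_of_mem (Submodule.subset_span ⟨j, ⟨hj, hji⟩, rfl⟩))
  intro h0
  have h1 := congrArg ((TensorProduct.rid k M).toLinearMap ∘ₗ lTensor M f) h0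
  simp only [map_sum, coe_comp, LinearEquiv.coe_coe, Function.comp_apply, lTensor_tmul,
    TensorProduct.rid_tmul, map_zero] at h1
  rw [Finset.sum_eq_single i (fun j hj hji => by simp [hfj j hj hji]) (absurd hi)] at h1
  exact ht ((smul_eq_zero.mp h1).resolve_left hfi)

lemma sum_tmul_ne_zero_of_linearIndepOn_left {k M N η : Type} [Field k] [AddCommGroup M]
    [Module k M] [AddCommGroup N] [Module k N] {s : Finset η} {b : η → N}
    (hb : LinearIndepOn k b s) (t : η → M) {i : η} (hi : i ∈ s) (ht : t i ≠ 0) :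
    ∑ j ∈ s, b j ⊗ₜ[k] t j ≠ 0 := by
  intro h0
  apply sum_tmul_ne_zero_of_linearIndepOn_right hb t hi ht
  simpa [map_sum] using congrArg (TensorProduct.comm k N M) h0

section Graded

variable {k A : Type} [Field k] [Ring A] [Bialgebra k A]
variable {ι : Type} [DecidableEq ι] (𝒜 : ι → Submodule k A) [DirectSum.Decomposition 𝒜]

lemma proj_apply_of_mem {β γ : ι} {x : A} (hx : x ∈ 𝒜 γ) :
    proj 𝒜 β x = if β = γ then x else 0 := by
  change (DirectSum.decompose 𝒜 x β : A) = _
  split_ifs with h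
  · exact h ▸ DirectSum.decompose_of_mem_same 𝒜 hx
  · exact DirectSum.decompose_of_mem_ne 𝒜 hx (Ne.symm h)

lemma sum_proj_of_mem {γ : ι} {x : A} (hx : x ∈ 𝒜 γ) {S : Finset ι} (hγ : γ ∈ S) :
    ∑ β ∈ S, proj 𝒜 β x = x := by
  simp [proj_apply_of_mem 𝒜 hx, hγ]

variable {𝒜} {n : ℕ} {b c : Fin n → A} {β δ : Fin n → ι} {x : A ⊗[k] A}

lemma exists_projT_ne_zero_of_rTensor_proj_ne_zero (hc : ∀ i, c i ∈ 𝒜 (δ i))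
    (hx : x = ∑ i, b i ⊗ₜ[k] c i) {β₀ : ι} (h : rTensor A (proj 𝒜 β₀) x ≠ 0) :
    ∃ γ, projT 𝒜 β₀ γ x ≠ 0 := by
  have hsplit : rTensor A (proj 𝒜 β₀) x = ∑ γ ∈ Finset.univ.image δ, projT 𝒜 β₀ γ x := by
    simp only [hx, map_sum, rTensor_tmul, projT, map_tmul]
    rw [Finset.sum_comm]
    refine Finset.sum_congr rfl fun j _ => ?_
    rw [← tmul_sum, sum_proj_of_mem 𝒜 (hc j) (Finset.mem_image_of_mem δ (Finset.mem_univ j))]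
  obtain ⟨γ, -, hγ⟩ := Finset.exists_ne_zero_of_sum_ne_zero (hsplit ▸ h)
  exact ⟨γ, hγ⟩

lemma exists_projT_ne_zero_of_lTensor_proj_ne_zero (hb : ∀ i, b i ∈ 𝒜 (β i))
    (hx : x = ∑ i, b i ⊗ₜ[k] c i) {γ₀ : ι} (h : lTensor A (proj 𝒜 γ₀) x ≠ 0) :
    ∃ γ, projT 𝒜 γ γ₀ x ≠ 0 := by
  have hsplit : lTensor A (proj 𝒜 γ₀) x = ∑ γ ∈ Finset.univ.image β, projT 𝒜 γ γ₀ x := by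
    simp only [hx, map_sum, lTensor_tmul, projT, map_tmul]
    rw [Finset.sum_comm]
    refine Finset.sum_congr rfl fun j _ => ?_
    rw [← sum_tmul, sum_proj_of_mem 𝒜 (hb j) (Finset.mem_image_of_mem β (Finset.mem_univ j))]
  obtain ⟨γ, -, hγ⟩ := Finset.exists_ne_zero_of_sum_ne_zero (hsplit ▸ h)
  exact ⟨γ, hγ⟩

end Graded

section Coproduct

open Coalgebra

variable {k A : Type} [Field k] [Ring A] [Bialgebra k A]
variable {ι : Type} [AddCommMonoid ι] [DecidableEq ι] {𝒜 : ι → Submodule k A}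
  [DirectSum.Decomposition 𝒜]
variable {a : A} {n : ℕ} {b c : Fin n → A} {β δ : Fin n → ι}

lemma Lset_subset_Lset_of_minimal (hgr : ComulGraded 𝒜) (hb : ∀ i, b i ∈ 𝒜 (β i))
    (hc : ∀ i, c i ∈ 𝒜 (δ i)) (hsum : comul (R := k) a = ∑ i, b i ⊗ₜ[k] c i)
    (hmin : ∀ m < n, ¬ HasHomogeneousWriting 𝒜 (comul (R := k) a) m) (i : Fin n) :
    Lset 𝒜 (b i) ⊆ Lset 𝒜 a := by
  rintro β' ⟨τ, hτ⟩
  have hdeg : β' + τ = β i := by_contra fun h => hτ (hgr _ _ (hb i) _ _ h)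
  refine exists_projT_ne_zero_of_rTensor_proj_ne_zero hc hsum fun h0 => ?_
  have hcoassoc : rTensor A (projT 𝒜 β' τ) (rTensor A comul (comul (R := k) a)) = 0 := by
    have hfactor : map (proj 𝒜 β') (rTensor A (proj 𝒜 τ)) ∘ₗ lTensor A comul =
        lTensor A (rTensor A (proj 𝒜 τ) ∘ₗ comul) ∘ₗ rTensor A (proj 𝒜 β') := by
      ext; rfl
    rw [← coassoc_symm_apply, rTensor, projT, map_map_assoc_symm, ← rTensor, ← comp_apply,
      hfactor, comp_apply, h0, map_zero, map_zero]
  have hsplit : rTensor A (projT 𝒜 β' τ) (rTensor A comul (comul (R := k) a)) =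
      ∑ j ∈ Finset.univ.filter (β · = β i), projT 𝒜 β' τ (comul (b j)) ⊗ₜ[k] c j := by
    rw [Finset.sum_filter_of_ne fun j _ hj => ?_]
    · simp [hsum, map_sum]
    · by_contra hne
      exact hj (by rw [hgr _ _ (hb j) _ _ (hdeg ▸ Ne.symm hne), zero_tmul])
  have hind : LinearIndepOn k c ↑(Finset.univ.filter (β · = β i)) := by
    simpa using linearIndepOn_right_of_minimal hb hc hsum hmin (β i)
  exact sum_tmul_ne_zero_of_linearIndepOn_right hind (fun j => projT 𝒜 β' τ (comul (b j)))
    (by simp) hτ (hsplit ▸ hcoassoc)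

lemma Rset_subset_Rset_of_minimal (hgr : ComulGraded 𝒜) (hb : ∀ i, b i ∈ 𝒜 (β i))
    (hc : ∀ i, c i ∈ 𝒜 (δ i)) (hsum : comul (R := k) a = ∑ i, b i ⊗ₜ[k] c i)
    (hmin : ∀ m < n, ¬ HasHomogeneousWriting 𝒜 (comul (R := k) a) m) (i : Fin n) :
    Rset 𝒜 (c i) ⊆ Rset 𝒜 a := by
  rintro γ' ⟨σ, hσ⟩
  have hdeg : σ + γ' = δ i := by_contra fun h => hσ (hgr _ _ (hc i) _ _ h)
  refine exists_projT_ne_zero_of_lTensor_proj_ne_zero hb hsum fun h0 => ?_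
  have hcoassoc : lTensor A (projT 𝒜 σ γ') (lTensor A comul (comul (R := k) a)) = 0 := by
    have hfactor : map (lTensor A (proj 𝒜 σ)) (proj 𝒜 γ') ∘ₗ rTensor A comul =
        rTensor A (lTensor A (proj 𝒜 σ) ∘ₗ comul) ∘ₗ lTensor A (proj 𝒜 γ') := by
      ext; rfl
    rw [← coassoc_apply, lTensor, projT, map_map_assoc, ← lTensor, ← comp_apply,
      hfactor, comp_apply, h0, map_zero, map_zero]
  have hsplit : lTensor A (projT 𝒜 σ γ') (lTensor A comul (comul (R := k) a)) =
      ∑ j ∈ Finset.univ.filter (δ · = δ i), b j ⊗ₜ[k] projT 𝒜 σ γ' (comul (c j)) := by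
    rw [Finset.sum_filter_of_ne fun j _ hj => ?_]
    · simp [hsum, map_sum]
    · by_contra hne
      exact hj (by rw [hgr _ _ (hc j) _ _ (hdeg ▸ Ne.symm hne), tmul_zero])
  have hind : LinearIndepOn k b ↑(Finset.univ.filter (δ · = δ i)) := by
    simpa using linearIndepOn_left_of_minimal hb hc hsum hmin (δ i)
  exact sum_tmul_ne_zero_of_linearIndepOn_left hind (fun j => projT 𝒜 σ γ' (comul (c j)))
    (by simp) hσ (hsplit ▸ hcoassoc)

end Coproduct

end MVPaper

open MVPaper in
theorem lemma_LbiRci_general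
    {k A : Type} [Field k] [Ring A] [Bialgebra k A]
    {Γ : AddSubmonoid (ℝ × ℝ)} [DecidableEq Γ]
    (𝒜 : Γ → Submodule k A) [DirectSum.Decomposition 𝒜]
    (hgr : ComulGraded 𝒜)
    (a : A)
    (n : ℕ) (b c : Fin n → A) (β δ : Fin n → Γ)
    (hb : ∀ i, b i ∈ 𝒜 (β i)) (hc : ∀ i, c i ∈ 𝒜 (δ i))
    (hsum : Coalgebra.comul (R := k) a = ∑ i, b i ⊗ₜ[k] c i)
    (hmin : ∀ m : ℕ, m < n →
      ¬ ∃ (b' c' : Fin m → A) (β' δ' : Fin m → Γ),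
          (∀ i, b' i ∈ 𝒜 (β' i)) ∧ (∀ i, c' i ∈ 𝒜 (δ' i)) ∧
          Coalgebra.comul (R := k) a = ∑ i, b' i ⊗ₜ[k] c' i)
    (i : Fin n) :
    Lset 𝒜 (b i) ⊆ Lset 𝒜 a ∧ Rset 𝒜 (c i) ⊆ Rset 𝒜 a :=
  ⟨Lset_subset_Lset_of_minimal hgr hb hc hsum hmin i,
    Rset_subset_Rset_of_minimal hgr hb hc hsum hmin i⟩

open MVPaper in
/-- In a connected `Γ`-graded bialgebra `A` over a field `k`, where `Γ` is a
discrete submonoid of the right half-plane, if `Δ(a) = ∑ i, bᵢ ⊗ cᵢ` is a writing of the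
coproduct of a homogeneous element `a` with all `bᵢ, cᵢ` homogeneous and the number of terms
minimal, then `L(bᵢ) ⊆ L(a)` and `R(cᵢ) ⊆ R(a)` for all `i`. -/
theorem lemma_LbiRci
    {k A : Type} [Field k] [Ring A] [Bialgebra k A]
    {Γ : AddSubmonoid (ℝ × ℝ)} [DecidableEq Γ]
    (𝒜 : Γ → Submodule k A) [DirectSum.Decomposition 𝒜] [SetLike.GradedMonoid 𝒜]
    (hHP : HalfPlane Γ) (hdisc : DiscreteTopology Γ)
    (hconn : GradedConnected 𝒜) (hgr : ComulGraded 𝒜) (hdec : ComulDecomposes 𝒜)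
    (a : A) (γa : Γ) (ha : a ∈ 𝒜 γa)
    (n : ℕ) (b c : Fin n → A) (β δ : Fin n → Γ)
    (hb : ∀ i, b i ∈ 𝒜 (β i)) (hc : ∀ i, c i ∈ 𝒜 (δ i))
    (hsum : Coalgebra.comul (R := k) a = ∑ i, b i ⊗ₜ[k] c i)
    (hmin : ∀ m : ℕ, m < n →
      ¬ ∃ (b' c' : Fin m → A) (β' δ' : Fin m → Γ),
          (∀ i, b' i ∈ 𝒜 (β' i)) ∧ (∀ i, c' i ∈ 𝒜 (δ' i)) ∧
          Coalgebra.comul (R := k) a = ∑ i, b' i ⊗ₜ[k] c' i)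
    (i : Fin n) :
    Lset 𝒜 (b i) ⊆ Lset 𝒜 a ∧ Rset 𝒜 (c i) ⊆ Rset 𝒜 a :=
  lemma_LbiRci_general 𝒜 hgr a n b c β δ hb hc hsum hmin i
end
end

section
/- Let A be a connected Γ-graded bialgebra as above and μ ∈ ℝ ∪ {∞}. Let A_{[μ]} be the span of semistable homogeneous elements of slope μ (i.e., homogeneous a with |a| ∈ Γ_μ and L(a) ⊂ Γ_{≤μ}). Then A_{[μ]} is a subalgebra of A, and the map Δ_μ = (p_μ ⊗ p_μ) ∘ Δ (where p_μ is the projection onto the slope-μ part A_μ) maps A_{[μ]} into A_{[μ]} ⊗ A_{[μ]}, making A_{[μ]} a bialgebra with coproduct Δ_μ. -/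
open scoped TensorProduct
open TensorProduct

noncomputable section

/-!
Relative to a fixed slope `μ`, the slope conditions on a point of the half-plane are sign
conditions on one additive functional (`slopeHeight μ`). Left degrees of `Δ(ab)` are sums of left
degrees of `Δa` and `Δb`, so products of semistable elements are semistable.

For `a` semistable of slope `μ` and `β`, `δ` of slope `μ`, coassociativity shows that the left
tensor factors of `Δ_{β,δ} a` have all their left degrees in `L(a)`, and the right tensor factors
have left degrees `ε` with `β + ε ∈ L(a)`; both are semistable of slope `μ`, which gives
`Δ_μ a ∈ A_{[μ]} ⊗ A_{[μ]}`. Tensor factors are extracted by contracting with linear functionals.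

Finally, the components of `Δa` and `Δb` have left degrees of slope `≤ μ` and right degrees of
slope `≥ μ`, so a product of two components has both degrees of slope `μ` exactly when both
factors do; hence `p_μ ⊗ p_μ` is multiplicative on these products, and `Δ_μ` is multiplicative.
-/

namespace MVPaper

/-- On the right half-plane, `v = 0 ∨ slope v = μ` (resp. `≤ μ`, `≥ μ`) holds iff
`slopeHeight μ v = 0` (resp. `≤ 0`, `≥ 0`). -/
def slopeHeight : WithTop ℝ → ℝ × ℝ → ℝ
  | ⊤, v => -v.1
  | (m : ℝ), v => v.2 - m * v.1

lemma slopeHeight_add (μ : WithTop ℝ) (v w : ℝ × ℝ) :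
    slopeHeight μ (v + w) = slopeHeight μ v + slopeHeight μ w := by
  cases μ <;> simp only [slopeHeight, Prod.fst_add, Prod.snd_add] <;> ring

section HalfPlane

variable {v w : ℝ × ℝ} (μ : WithTop ℝ)

lemma eq_zero_or_slope_eq_iff (hv : 0 < v.1 ∨ (v.1 = 0 ∧ 0 ≤ v.2)) :
    v = 0 ∨ slope v = μ ↔ slopeHeight μ v = 0 := by
  rcases hv with hv | ⟨hv1, hv2⟩
  · cases μ <;> simp [slope, slopeHeight, hv.ne', Prod.ext_iff, sub_eq_zero, div_eq_iff]
  · cases μ <;> simp [slope, slopeHeight, hv1, Prod.ext_iff]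

lemma eq_zero_or_slope_le_iff (hv : 0 < v.1 ∨ (v.1 = 0 ∧ 0 ≤ v.2)) :
    v = 0 ∨ slope v ≤ μ ↔ slopeHeight μ v ≤ 0 := by
  rcases hv with hv | ⟨hv1, hv2⟩
  · cases μ <;> simp [slope, slopeHeight, hv.ne', Prod.ext_iff, div_le_iff₀ hv, hv.le]
  · have hv0 : v = 0 ↔ v.2 ≤ 0 := by
      simp only [Prod.ext_iff, hv1, Prod.fst_zero, Prod.snd_zero, true_and]
      exact ⟨le_of_eq, fun h => le_antisymm h hv2⟩
    cases μ <;> simp [slope, slopeHeight, hv1, hv0]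

lemma eq_zero_or_le_slope_iff (hv : 0 < v.1 ∨ (v.1 = 0 ∧ 0 ≤ v.2)) :
    v = 0 ∨ μ ≤ slope v ↔ 0 ≤ slopeHeight μ v := by
  rcases hv with hv | ⟨hv1, hv2⟩
  · cases μ <;> simp [slope, slopeHeight, hv.ne', Prod.ext_iff, le_div_iff₀ hv, hv]
  · cases μ <;> simp [slope, slopeHeight, hv1, hv2]

lemma eq_zero_of_add_eq_zero (hv : 0 < v.1 ∨ (v.1 = 0 ∧ 0 ≤ v.2))
    (hw : 0 < w.1 ∨ (w.1 = 0 ∧ 0 ≤ w.2)) (h : v + w = 0) : v = 0 := by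
  obtain ⟨h1, h2⟩ := Prod.ext_iff.1 h
  simp only [Prod.fst_add, Prod.snd_add, Prod.fst_zero, Prod.snd_zero] at h1 h2
  ext <;> simp only [Prod.fst_zero, Prod.snd_zero] <;>
    rcases hv with hv | ⟨hv1, hv2⟩ <;> rcases hw with hw | ⟨hw1, hw2⟩ <;> linarith

end HalfPlane

section Slopes

variable {Γ : AddSubmonoid (ℝ × ℝ)} {μ : WithTop ℝ} {β δ : Γ}

lemma memSlope_iff (hHP : HalfPlane Γ) : memSlope μ β ↔ slopeHeight μ β = 0 :=
  eq_zero_or_slope_eq_iff μ (hHP _ β.2)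

lemma memSlopeLE_iff (hHP : HalfPlane Γ) : memSlopeLE μ β ↔ slopeHeight μ β ≤ 0 :=
  eq_zero_or_slope_le_iff μ (hHP _ β.2)

lemma memSlopeGE_iff (hHP : HalfPlane Γ) : memSlopeGE μ β ↔ 0 ≤ slopeHeight μ β :=
  eq_zero_or_le_slope_iff μ (hHP _ β.2)

lemma slopeHeight_coe_add (μ : WithTop ℝ) (β δ : Γ) :
    slopeHeight μ ↑(β + δ) = slopeHeight μ β + slopeHeight μ δ :=
  slopeHeight_add μ β δ

lemma memSlope_add_iff_of_memSlopeLE (hHP : HalfPlane Γ) (hβ : memSlopeLE μ β)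
    (hδ : memSlopeLE μ δ) : memSlope μ (β + δ) ↔ memSlope μ β ∧ memSlope μ δ := by
  rw [memSlopeLE_iff hHP] at hβ hδ
  rw [memSlope_iff hHP, memSlope_iff hHP, memSlope_iff hHP, slopeHeight_coe_add]
  constructor
  · intro h; constructor <;> linarith
  · rintro ⟨h, h'⟩; linarith

lemma memSlope_add_iff_of_memSlopeGE (hHP : HalfPlane Γ) (hβ : memSlopeGE μ β)
    (hδ : memSlopeGE μ δ) : memSlope μ (β + δ) ↔ memSlope μ β ∧ memSlope μ δ := by
  rw [memSlopeGE_iff hHP] at hβ hδ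
  rw [memSlope_iff hHP, memSlope_iff hHP, memSlope_iff hHP, slopeHeight_coe_add]
  constructor
  · intro h; constructor <;> linarith
  · rintro ⟨h, h'⟩; linarith

end Slopes

section TensorContraction

variable {k M N P : Type} [Field k] [AddCommGroup M] [Module k M] [AddCommGroup N] [Module k N]
  [AddCommGroup P] [Module k P]

lemma rid_map (f : M →ₗ[k] P) (φ : N →ₗ[k] k) (t : M ⊗[k] N) :
    TensorProduct.rid k P (map f φ t) = f (TensorProduct.rid k M (φ.lTensor M t)) := by
  induction t using TensorProduct.induction_on with
  | zero => simp
  | tmul m n => simp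
  | add s t hs ht => simp only [map_add, hs, ht]

lemma lid_map (ψ : M →ₗ[k] k) (f : N →ₗ[k] P) (t : M ⊗[k] N) :
    TensorProduct.lid k P (map ψ f t) = f (TensorProduct.lid k N (ψ.rTensor N t)) := by
  induction t using TensorProduct.induction_on with
  | zero => simp
  | tmul m n => simp
  | add s t hs ht => simp only [map_add, hs, ht]

lemma mem_range_map_subtype_of_contractions {X : Submodule k M} {Y : Submodule k N}
    {t : M ⊗[k] N} (hX : ∀ φ : N →ₗ[k] k, TensorProduct.rid k M (φ.lTensor M t) ∈ X)
    (hY : ∀ ψ : M →ₗ[k] k, TensorProduct.lid k N (ψ.rTensor N t) ∈ Y) :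
    t ∈ LinearMap.range (map X.subtype Y.subtype) := by
  classical
  -- first `t ∈ X ⊗ N` via a basis of `N`, then `t ∈ X ⊗ Y` via a basis of `X`, whose coordinate
  -- functionals extend to `M`
  obtain ⟨s, rfl⟩ : t ∈ LinearMap.range (X.subtype.rTensor N) := by
    let 𝒞 := Module.Basis.ofVectorSpace k N
    rw [← (equivFinsuppOfBasisRight 𝒞).symm_apply_apply t, equivFinsuppOfBasisRight_symm_apply]
    refine Submodule.finsuppSum_mem _ _ _ _ fun i _ => ⟨⟨_, hX (𝒞.coord i)⟩ ⊗ₜ 𝒞 i, ?_⟩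
    rw [LinearMap.rTensor_tmul, equivFinsuppOfBasisRight_apply]
    rfl
  let ℬ := Module.Basis.ofVectorSpace k X
  rw [← (equivFinsuppOfBasisLeft ℬ).symm_apply_apply s, equivFinsuppOfBasisLeft_symm_apply,
    Finsupp.sum, map_sum]
  refine Submodule.sum_mem _ fun j _ => ?_
  obtain ⟨ψ, hψ⟩ := LinearMap.exists_extend (ℬ.coord j)
  have hcoeff : equivFinsuppOfBasisLeft ℬ s j ∈ Y := by
    rw [equivFinsuppOfBasisLeft_apply, ← hψ, LinearMap.rTensor_comp_apply]
    exact hY ψ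
  exact ⟨ℬ j ⊗ₜ ⟨_, hcoeff⟩, rfl⟩

end TensorContraction

section RangeMap

variable {k M N : Type} [Field k] [AddCommGroup M] [Module k M] [AddCommGroup N] [Module k N]
  {X : Submodule k M} {Y : Submodule k N} {f : M →ₗ[k] M} {g : N →ₗ[k] N} {s : M ⊗[k] N}

lemma map_eq_self_of_mem_range (hf : f ∘ₗ X.subtype = X.subtype) (hg : g ∘ₗ Y.subtype = Y.subtype)
    (hs : s ∈ LinearMap.range (map X.subtype Y.subtype)) : map f g s = s := by
  obtain ⟨u, rfl⟩ := hs
  rw [← LinearMap.comp_apply, ← map_comp, hf, hg]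

lemma map_eq_zero_of_mem_range (h : f ∘ₗ X.subtype = 0 ∨ g ∘ₗ Y.subtype = 0)
    (hs : s ∈ LinearMap.range (map X.subtype Y.subtype)) : map f g s = 0 := by
  obtain ⟨u, rfl⟩ := hs
  rw [← LinearMap.comp_apply, ← map_comp]
  rcases h with h | h <;> simp [h]

end RangeMap

section Components

variable {k A : Type} [Field k] [Ring A] [Bialgebra k A]
variable {ι : Type} [DecidableEq ι]
variable (𝒜 : ι → Submodule k A) [DirectSum.Decomposition 𝒜]

lemma proj_mem (γ : ι) (x : A) : proj 𝒜 γ x ∈ 𝒜 γ := (DirectSum.decompose 𝒜 x γ).2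

variable {𝒜} in
lemma proj_of_mem {γ : ι} {x : A} (hx : x ∈ 𝒜 γ) : proj 𝒜 γ x = x :=
  DirectSum.decompose_of_mem_same 𝒜 hx

variable {𝒜} in
lemma proj_of_mem_of_ne {γ γ' : ι} {x : A} (hx : x ∈ 𝒜 γ) (h : γ ≠ γ') : proj 𝒜 γ' x = 0 :=
  DirectSum.decompose_of_mem_ne 𝒜 hx h

lemma proj_comp_subtype (γ : ι) : proj 𝒜 γ ∘ₗ (𝒜 γ).subtype = (𝒜 γ).subtype :=
  LinearMap.ext fun x => proj_of_mem x.2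

lemma proj_comp_subtype_of_ne {γ γ' : ι} (h : γ ≠ γ') : proj 𝒜 γ' ∘ₗ (𝒜 γ).subtype = 0 :=
  LinearMap.ext fun x => proj_of_mem_of_ne x.2 h

def tensorComponent (β δ : ι) : Submodule k (A ⊗[k] A) :=
  LinearMap.range (map (𝒜 β).subtype (𝒜 δ).subtype)

lemma projT_mem_tensorComponent (β δ : ι) (t : A ⊗[k] A) :
    projT 𝒜 β δ t ∈ tensorComponent 𝒜 β δ := by
  rw [projT, proj, proj, map_comp]
  exact LinearMap.mem_range_self _ _

def comulComponent (ε ζ : ι) : A →ₗ[k] A ⊗[k] A :=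
  projT 𝒜 ε ζ ∘ₗ Coalgebra.comul

variable {𝒜}

lemma projT_of_mem_tensorComponent {β δ : ι} {s : A ⊗[k] A} (hs : s ∈ tensorComponent 𝒜 β δ) :
    projT 𝒜 β δ s = s :=
  map_eq_self_of_mem_range (proj_comp_subtype 𝒜 β) (proj_comp_subtype 𝒜 δ) hs

lemma projT_eq_zero_of_mem_tensorComponent {β δ ε ζ : ι} (h : β ≠ ε ∨ δ ≠ ζ) {s : A ⊗[k] A}
    (hs : s ∈ tensorComponent 𝒜 β δ) : projT 𝒜 ε ζ s = 0 :=
  map_eq_zero_of_mem_range (h.imp (proj_comp_subtype_of_ne 𝒜) (proj_comp_subtype_of_ne 𝒜)) hs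

lemma map_proj_comulComponent_comul (ε ζ δ : ι) (a : A) :
    map (proj 𝒜 ε) (comulComponent 𝒜 ζ δ) (Coalgebra.comul (R := k) a) =
      TensorProduct.assoc k A A A
        (map (comulComponent 𝒜 ε ζ) (proj 𝒜 δ) (Coalgebra.comul (R := k) a)) := by
  rw [comulComponent, comulComponent, ← LinearMap.map_comp_lTensor, LinearMap.comp_apply,
    ← Coalgebra.coassoc_apply, projT, map_map_assoc, ← LinearMap.comp_apply (map _ _),
    LinearMap.map_comp_rTensor]
  rfl

lemma rTensor_proj_comul_eq_zero (hdec : ComulDecomposes 𝒜) {ε : ι} {a : A}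
    (h : ε ∉ Lset 𝒜 a) : (proj 𝒜 ε).rTensor A (Coalgebra.comul (R := k) a) = 0 := by
  obtain ⟨S, hS⟩ := hdec a
  rw [hS, map_sum]
  refine Finset.sum_eq_zero fun p _ => ?_
  by_cases hp : p.1 = ε
  · rw [hp, not_not.1 fun hne => h ⟨p.2, hne⟩, map_zero]
  · exact map_eq_zero_of_mem_range (.inl (proj_comp_subtype_of_ne 𝒜 hp))
      (projT_mem_tensorComponent 𝒜 p.1 p.2 _)

end Components

section GradedComponents

variable {k A : Type} [Field k] [Ring A] [Bialgebra k A]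
variable {ι : Type} [AddCommMonoid ι]
variable {𝒜 : ι → Submodule k A}

lemma tensorComponent_mul_le [SetLike.GradedMonoid 𝒜] (β δ β' δ' : ι) :
    tensorComponent 𝒜 β δ * tensorComponent 𝒜 β' δ' ≤ tensorComponent 𝒜 (β + β') (δ + δ') := by
  rw [tensorComponent, tensorComponent, range_map_eq_span_tmul, range_map_eq_span_tmul,
    Submodule.span_mul_span, tensorComponent, range_map_eq_span_tmul, Submodule.span_le]
  rintro _ ⟨_, ⟨x, y, rfl⟩, _, ⟨x', y', rfl⟩, rfl⟩
  refine Submodule.subset_span ⟨⟨_, SetLike.mul_mem_graded x.2 x'.2⟩,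
    ⟨_, SetLike.mul_mem_graded y.2 y'.2⟩, ?_⟩
  simp

variable [DecidableEq ι] [DirectSum.Decomposition 𝒜]

lemma comulComponent_comp_proj_of_ne (hgr : ComulGraded 𝒜) {ε ζ γ : ι} (h : ε + ζ ≠ γ) :
    comulComponent 𝒜 ε ζ ∘ₗ proj 𝒜 γ = 0 :=
  LinearMap.ext fun z => hgr γ _ (proj_mem 𝒜 γ z) ε ζ h

lemma comulComponent_comp_proj_add (hgr : ComulGraded 𝒜) (ε ζ : ι) :
    comulComponent 𝒜 ε ζ ∘ₗ proj 𝒜 (ε + ζ) = comulComponent 𝒜 ε ζ := by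
  classical
  ext z
  conv_rhs => rw [← DirectSum.sum_support_decompose 𝒜 z]
  rw [map_sum, LinearMap.comp_apply, Finset.sum_eq_single (ε + ζ)]
  · rfl
  · intro γ _ hγ
    exact hgr γ _ (SetLike.coe_mem _) ε ζ (Ne.symm hγ)
  · intro h
    change comulComponent 𝒜 ε ζ (DirectSum.decompose 𝒜 z (ε + ζ) : A) = 0
    rw [DFinsupp.notMem_support_iff.1 h, ZeroMemClass.coe_zero, map_zero]

lemma Lset_rid_lTensor_projT_comul_subset (hgr : ComulGraded 𝒜) (hdec : ComulDecomposes 𝒜)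
    (φ : A →ₗ[k] k) (β δ : ι) (a : A) :
    Lset 𝒜 (TensorProduct.rid k A (φ.lTensor A (projT 𝒜 β δ (Coalgebra.comul (R := k) a)))) ⊆
      Lset 𝒜 a := by
  intro ε ⟨ζ, hζ⟩
  by_contra hεa
  apply hζ
  change comulComponent 𝒜 ε ζ _ = 0
  rw [projT, ← LinearMap.comp_apply (φ.lTensor A), LinearMap.lTensor_comp_map, rid_map,
    ← LinearMap.comp_apply (comulComponent 𝒜 ε ζ)]
  by_cases hβ : ε + ζ = β
  -- by coassociativity `(Δ_{ε,ζ} ⊗ proj δ) Δa` is a rearrangement of `(proj ε ⊗ Δ_{ζ,δ}) Δa`,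
  -- which vanishes since `ε ∉ L(a)`
  · rw [← hβ, comulComponent_comp_proj_add hgr, ← rid_map, ← LinearMap.lTensor_comp_map,
      LinearMap.comp_apply, (LinearEquiv.eq_symm_apply (TensorProduct.assoc k A A A)).2
        (map_proj_comulComponent_comul ε ζ δ a).symm, ← LinearMap.lTensor_comp_rTensor,
      LinearMap.comp_apply, rTensor_proj_comul_eq_zero hdec hεa]
    simp
  · rw [comulComponent_comp_proj_of_ne hgr hβ, LinearMap.zero_apply]

lemma add_mem_Lset_of_mem_Lset_lid_rTensor_projT_comul (hgr : ComulGraded 𝒜)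
    (hdec : ComulDecomposes 𝒜) (ψ : A →ₗ[k] k) {β δ ε : ι} {a : A}
    (hε : ε ∈ Lset 𝒜 (TensorProduct.lid k A (ψ.rTensor A
      (projT 𝒜 β δ (Coalgebra.comul (R := k) a))))) :
    β + ε ∈ Lset 𝒜 a := by
  obtain ⟨ζ, hζ⟩ := hε
  by_contra hβε
  apply hζ
  change comulComponent 𝒜 ε ζ _ = 0
  rw [projT, ← LinearMap.comp_apply (ψ.rTensor A), LinearMap.rTensor_comp_map, lid_map,
    ← LinearMap.comp_apply (comulComponent 𝒜 ε ζ)]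
  by_cases hδ : ε + ζ = δ
  -- by coassociativity we reach `(Δ_{β,ε} ⊗ proj ζ) Δa`, which only sees the `(β + ε)`-left
  -- component of `Δa`
  · rw [← hδ, comulComponent_comp_proj_add hgr, ← lid_map, ← LinearMap.rTensor_comp_map,
      LinearMap.comp_apply, map_proj_comulComponent_comul, ← comulComponent_comp_proj_add hgr β ε,
      ← LinearMap.rTensor_comp_map, LinearMap.comp_apply, ← LinearMap.lTensor_comp_rTensor,
      LinearMap.comp_apply, rTensor_proj_comul_eq_zero hdec hβε]
    simp
  · rw [comulComponent_comp_proj_of_ne hgr hδ, LinearMap.zero_apply]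

open scoped Pointwise in
lemma Lset_mul_subset [SetLike.GradedMonoid 𝒜] (hdec : ComulDecomposes 𝒜) (a b : A) :
    Lset 𝒜 (a * b) ⊆ Lset 𝒜 a + Lset 𝒜 b := by
  rintro ε ⟨ζ, hζ⟩
  obtain ⟨Sa, hSa⟩ := hdec a
  obtain ⟨Sb, hSb⟩ := hdec b
  rw [Bialgebra.comul_mul, hSa, hSb, Finset.sum_mul_sum, map_sum] at hζ
  obtain ⟨p, -, hp⟩ := Finset.exists_ne_zero_of_sum_ne_zero hζ
  rw [map_sum] at hp
  obtain ⟨q, -, hpq⟩ := Finset.exists_ne_zero_of_sum_ne_zero hp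
  have hmem := tensorComponent_mul_le p.1 p.2 q.1 q.2
    (Submodule.mul_mem_mul (projT_mem_tensorComponent 𝒜 p.1 p.2 (Coalgebra.comul (R := k) a))
      (projT_mem_tensorComponent 𝒜 q.1 q.2 (Coalgebra.comul (R := k) b)))
  have hε : p.1 + q.1 = ε := by_contra fun hne =>
    hpq (projT_eq_zero_of_mem_tensorComponent (.inl hne) hmem)
  refine ⟨p.1, ⟨p.2, fun h => hpq ?_⟩, q.1, ⟨q.2, fun h => hpq ?_⟩, hε⟩ <;> simp [h]

end GradedComponents

section Semistable

variable {k A : Type} [Field k] [Ring A] [Bialgebra k A]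
variable {Γ : AddSubmonoid (ℝ × ℝ)} [DecidableEq Γ]
variable {𝒜 : Γ → Submodule k A} [DirectSum.Decomposition 𝒜]
variable {μ : WithTop ℝ} {a b : A} {β γ δ : Γ}

lemma memSlopeGE_of_projT_comul_ne_zero (hHP : HalfPlane Γ) (hgr : ComulGraded 𝒜)
    (ha : IsSemistableAt 𝒜 μ γ a) (h : projT 𝒜 β δ (Coalgebra.comul (R := k) a) ≠ 0) :
    memSlopeGE μ δ := by
  have hγ : β + δ = γ := by_contra fun hne => h (hgr γ a ha.1 β δ hne)
  have hβ := (memSlopeLE_iff hHP).1 (ha.2.2 β ⟨δ, h⟩)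
  have hsum := (memSlope_iff hHP).1 ha.2.1
  rw [← hγ, slopeHeight_coe_add] at hsum
  rw [memSlopeGE_iff hHP]
  linarith

lemma IsSemistableAt.rid_lTensor_projT_comul (hgr : ComulGraded 𝒜) (hdec : ComulDecomposes 𝒜)
    (ha : IsSemistableAt 𝒜 μ γ a) (hβ : memSlope μ β) (φ : A →ₗ[k] k) (δ : Γ) :
    IsSemistableAt 𝒜 μ β
      (TensorProduct.rid k A (φ.lTensor A (projT 𝒜 β δ (Coalgebra.comul (R := k) a)))) := by
  refine ⟨?_, hβ, fun ε hε => ha.2.2 ε (Lset_rid_lTensor_projT_comul_subset hgr hdec φ β δ a hε)⟩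
  rw [projT, ← LinearMap.comp_apply (φ.lTensor A), LinearMap.lTensor_comp_map, rid_map]
  exact proj_mem 𝒜 β _

lemma IsSemistableAt.lid_rTensor_projT_comul (hHP : HalfPlane Γ) (hgr : ComulGraded 𝒜)
    (hdec : ComulDecomposes 𝒜) (ha : IsSemistableAt 𝒜 μ γ a) (hβ : memSlope μ β)
    (hδ : memSlope μ δ) (ψ : A →ₗ[k] k) :
    IsSemistableAt 𝒜 μ δ
      (TensorProduct.lid k A (ψ.rTensor A (projT 𝒜 β δ (Coalgebra.comul (R := k) a)))) := by
  refine ⟨?_, hδ, fun ε hε => ?_⟩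
  · rw [projT, ← LinearMap.comp_apply (ψ.rTensor A), LinearMap.rTensor_comp_map, lid_map]
    exact proj_mem 𝒜 δ _
  · have hβε := (memSlopeLE_iff hHP).1
      (ha.2.2 _ (add_mem_Lset_of_mem_Lset_lid_rTensor_projT_comul hgr hdec ψ hε))
    rw [slopeHeight_coe_add, (memSlope_iff hHP).1 hβ, zero_add] at hβε
    exact (memSlopeLE_iff hHP).2 hβε

lemma projT_comul_mem_range_map_Asemi (hHP : HalfPlane Γ) (hgr : ComulGraded 𝒜)
    (hdec : ComulDecomposes 𝒜) (ha : IsSemistableAt 𝒜 μ γ a) (hβ : memSlope μ β)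
    (hδ : memSlope μ δ) :
    projT 𝒜 β δ (Coalgebra.comul (R := k) a) ∈
      LinearMap.range (map (Asemi 𝒜 μ).subtype (Asemi 𝒜 μ).subtype) :=
  mem_range_map_subtype_of_contractions
    (fun φ => Submodule.subset_span ⟨β, ha.rid_lTensor_projT_comul hgr hdec hβ φ δ⟩)
    (fun ψ => Submodule.subset_span ⟨δ, ha.lid_rTensor_projT_comul hHP hgr hdec hβ hδ ψ⟩)

open Classical in
lemma pSlope_comp_subtype (μ : WithTop ℝ) (γ : Γ) :
    pSlope 𝒜 μ ∘ₗ (𝒜 γ).subtype = if memSlope μ γ then (𝒜 γ).subtype else 0 := by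
  ext ⟨x, hx⟩
  change DirectSum.toModule k Γ A _ (DirectSum.decompose 𝒜 x) = _
  rw [DirectSum.decompose_of_mem 𝒜 hx, ← DirectSum.lof_eq_of k, DirectSum.toModule_lof]

open Classical in
lemma map_pSlope_of_mem_tensorComponent {s : A ⊗[k] A} (hs : s ∈ tensorComponent 𝒜 β δ) :
    map (pSlope 𝒜 μ) (pSlope 𝒜 μ) s = if memSlope μ β ∧ memSlope μ δ then s else 0 := by
  split_ifs with h
  · exact map_eq_self_of_mem_range (by rw [pSlope_comp_subtype, if_pos h.1])
      (by rw [pSlope_comp_subtype, if_pos h.2]) hs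
  · refine map_eq_zero_of_mem_range ((not_and_or.1 h).imp ?_ ?_) hs <;>
      exact fun h' => by rw [pSlope_comp_subtype, if_neg h']

variable (𝒜) in
def comulSlope (μ : WithTop ℝ) : A →ₗ[k] A ⊗[k] A :=
  map (pSlope 𝒜 μ) (pSlope 𝒜 μ) ∘ₗ Coalgebra.comul

lemma comulSlope_mem_range_map_Asemi (hHP : HalfPlane Γ) (hgr : ComulGraded 𝒜)
    (hdec : ComulDecomposes 𝒜) (ha : a ∈ Asemi 𝒜 μ) :
    comulSlope 𝒜 μ a ∈ LinearMap.range (map (Asemi 𝒜 μ).subtype (Asemi 𝒜 μ).subtype) := by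
  suffices Asemi 𝒜 μ ≤ (LinearMap.range _).comap (comulSlope 𝒜 μ) from this ha
  refine Submodule.span_le.2 ?_
  rintro x ⟨γ, hx⟩
  obtain ⟨S, hS⟩ := hdec x
  change map (pSlope 𝒜 μ) (pSlope 𝒜 μ) (Coalgebra.comul (R := k) x) ∈
    LinearMap.range (map (Asemi 𝒜 μ).subtype (Asemi 𝒜 μ).subtype)
  rw [hS, map_sum]
  refine Submodule.sum_mem _ fun p _ => ?_
  rw [map_pSlope_of_mem_tensorComponent (projT_mem_tensorComponent 𝒜 p.1 p.2 _)]
  split_ifs with h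
  · exact projT_comul_mem_range_map_Asemi hHP hgr hdec hx h.1 h.2
  · exact zero_mem _

variable [SetLike.GradedMonoid 𝒜]

lemma map_pSlope_mul_of_mem_tensorComponent (hHP : HalfPlane Γ) {β' δ' : Γ}
    (hβ : memSlopeLE μ β) (hβ' : memSlopeLE μ β') (hδ : memSlopeGE μ δ) (hδ' : memSlopeGE μ δ')
    {s s' : A ⊗[k] A} (hs : s ∈ tensorComponent 𝒜 β δ) (hs' : s' ∈ tensorComponent 𝒜 β' δ') :
    map (pSlope 𝒜 μ) (pSlope 𝒜 μ) (s * s') =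
      map (pSlope 𝒜 μ) (pSlope 𝒜 μ) s * map (pSlope 𝒜 μ) (pSlope 𝒜 μ) s' := by
  rw [map_pSlope_of_mem_tensorComponent hs, map_pSlope_of_mem_tensorComponent hs',
    map_pSlope_of_mem_tensorComponent (tensorComponent_mul_le β δ β' δ'
      (Submodule.mul_mem_mul hs hs')),
    memSlope_add_iff_of_memSlopeLE hHP hβ hβ', memSlope_add_iff_of_memSlopeGE hHP hδ hδ']
  split_ifs <;> simp_all

lemma isSemistableAt_one (hHP : HalfPlane Γ) (hgr : ComulGraded 𝒜) (μ : WithTop ℝ) :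
    IsSemistableAt 𝒜 μ 0 (1 : A) := by
  refine ⟨SetLike.GradedOne.one_mem, .inl rfl, fun β ⟨ζ, hζ⟩ => .inl ?_⟩
  have hβζ : β + ζ = 0 := by_contra fun hne => hζ (hgr 0 1 SetLike.GradedOne.one_mem β ζ hne)
  exact eq_zero_of_add_eq_zero (hHP _ β.2) (hHP _ ζ.2) (congrArg Subtype.val hβζ)

lemma IsSemistableAt.mul (hHP : HalfPlane Γ) (hdec : ComulDecomposes 𝒜)
    (ha : IsSemistableAt 𝒜 μ β a) (hb : IsSemistableAt 𝒜 μ δ b) :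
    IsSemistableAt 𝒜 μ (β + δ) (a * b) := by
  refine ⟨SetLike.mul_mem_graded ha.1 hb.1, ?_, fun ε hε => ?_⟩
  · rw [memSlope_iff hHP, slopeHeight_coe_add, (memSlope_iff hHP).1 ha.2.1,
      (memSlope_iff hHP).1 hb.2.1, add_zero]
  · obtain ⟨β', hβ', δ', hδ', rfl⟩ := Lset_mul_subset hdec a b hε
    have h1 := (memSlopeLE_iff hHP).1 (ha.2.2 β' hβ')
    have h2 := (memSlopeLE_iff hHP).1 (hb.2.2 δ' hδ')
    rw [memSlopeLE_iff hHP, slopeHeight_coe_add]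
    linarith

lemma mul_mem_Asemi (hHP : HalfPlane Γ) (hdec : ComulDecomposes 𝒜) (ha : a ∈ Asemi 𝒜 μ)
    (hb : b ∈ Asemi 𝒜 μ) : a * b ∈ Asemi 𝒜 μ := by
  have hab := Submodule.mul_mem_mul ha hb
  rw [Asemi, Submodule.span_mul_span] at hab
  refine Submodule.span_mono ?_ hab
  rintro _ ⟨x, ⟨β, hx⟩, y, ⟨δ, hy⟩, rfl⟩
  exact ⟨β + δ, hx.mul hHP hdec hy⟩

lemma comulSlope_mul_of_isSemistableAt (hHP : HalfPlane Γ) (hgr : ComulGraded 𝒜)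
    (hdec : ComulDecomposes 𝒜) (ha : IsSemistableAt 𝒜 μ β a) (hb : IsSemistableAt 𝒜 μ δ b) :
    comulSlope 𝒜 μ (a * b) = comulSlope 𝒜 μ a * comulSlope 𝒜 μ b := by
  obtain ⟨Sa, hSa⟩ := hdec a
  obtain ⟨Sb, hSb⟩ := hdec b
  simp only [comulSlope, LinearMap.comp_apply]
  rw [Bialgebra.comul_mul, hSa, hSb, Finset.sum_mul_sum]
  simp only [map_sum]
  rw [Finset.sum_mul_sum]
  refine Finset.sum_congr rfl fun p _ => Finset.sum_congr rfl fun q _ => ?_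
  by_cases hp : projT 𝒜 p.1 p.2 (Coalgebra.comul (R := k) a) = 0
  · simp [hp]
  by_cases hq : projT 𝒜 q.1 q.2 (Coalgebra.comul (R := k) b) = 0
  · simp [hq]
  exact map_pSlope_mul_of_mem_tensorComponent hHP (ha.2.2 _ ⟨_, hp⟩) (hb.2.2 _ ⟨_, hq⟩)
    (memSlopeGE_of_projT_comul_ne_zero hHP hgr ha hp)
    (memSlopeGE_of_projT_comul_ne_zero hHP hgr hb hq)
    (projT_mem_tensorComponent 𝒜 _ _ _) (projT_mem_tensorComponent 𝒜 _ _ _)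

lemma comulSlope_mul (hHP : HalfPlane Γ) (hgr : ComulGraded 𝒜) (hdec : ComulDecomposes 𝒜)
    (ha : a ∈ Asemi 𝒜 μ) (hb : b ∈ Asemi 𝒜 μ) :
    comulSlope 𝒜 μ (a * b) = comulSlope 𝒜 μ a * comulSlope 𝒜 μ b := by
  have hleft : ∀ x, IsSemistable 𝒜 μ x → Set.EqOn (comulSlope 𝒜 μ ∘ₗ LinearMap.mulLeft k x)
      (LinearMap.mulLeft k (comulSlope 𝒜 μ x) ∘ₗ comulSlope 𝒜 μ) (Asemi 𝒜 μ) :=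
    fun x ⟨_, hx⟩ => LinearMap.eqOn_span' fun y ⟨_, hy⟩ =>
      comulSlope_mul_of_isSemistableAt hHP hgr hdec hx hy
  exact LinearMap.eqOn_span' (f := comulSlope 𝒜 μ ∘ₗ LinearMap.mulRight k b)
    (g := LinearMap.mulRight k (comulSlope 𝒜 μ b) ∘ₗ comulSlope 𝒜 μ)
    (fun x hx => hleft x hx hb) ha

end Semistable

end MVPaper

open MVPaper in
theorem prop_StableBialgebras_general
    {k A : Type} [Field k] [Ring A] [Bialgebra k A]
    {Γ : AddSubmonoid (ℝ × ℝ)} [DecidableEq Γ]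
    (𝒜 : Γ → Submodule k A) [DirectSum.Decomposition 𝒜] [SetLike.GradedMonoid 𝒜]
    (hHP : HalfPlane Γ)
    (hgr : ComulGraded 𝒜) (hdec : ComulDecomposes 𝒜)
    (μ : WithTop ℝ) :
    ((1 : A) ∈ Asemi 𝒜 μ) ∧
    (Asemi 𝒜 μ ≤ Aslope 𝒜 μ) ∧
    (∀ a ∈ Asemi 𝒜 μ, ∀ b ∈ Asemi 𝒜 μ, a * b ∈ Asemi 𝒜 μ) ∧
    (∀ a ∈ Asemi 𝒜 μ,
      TensorProduct.map (pSlope 𝒜 μ) (pSlope 𝒜 μ) (Coalgebra.comul (R := k) a) ∈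
        LinearMap.range (TensorProduct.map (Asemi 𝒜 μ).subtype (Asemi 𝒜 μ).subtype)) ∧
    (∀ a ∈ Asemi 𝒜 μ, ∀ b ∈ Asemi 𝒜 μ,
      TensorProduct.map (pSlope 𝒜 μ) (pSlope 𝒜 μ) (Coalgebra.comul (R := k) (a * b)) =
        TensorProduct.map (pSlope 𝒜 μ) (pSlope 𝒜 μ) (Coalgebra.comul (R := k) a) *
        TensorProduct.map (pSlope 𝒜 μ) (pSlope 𝒜 μ) (Coalgebra.comul (R := k) b)) :=
  ⟨Submodule.subset_span ⟨0, isSemistableAt_one hHP hgr μ⟩,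
    Submodule.span_le.2 fun _ ⟨γ, ha, hγ, _⟩ =>
      Submodule.mem_iSup_of_mem γ (Submodule.mem_iSup_of_mem hγ ha),
    fun _ ha _ hb => mul_mem_Asemi hHP hdec ha hb,
    fun _ ha => comulSlope_mem_range_map_Asemi hHP hgr hdec ha,
    fun _ ha _ hb => comulSlope_mul hHP hgr hdec ha hb⟩

open MVPaper in
/-- `A_{[μ]}` is a subalgebra of `A_μ`, and
`Δ_μ = (p_μ ⊗ p_μ) ∘ Δ` maps `A_{[μ]}` into `A_{[μ]} ⊗ A_{[μ]}`; `A_{[μ]}` thereby becomes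
a bialgebra with coproduct `Δ_μ` (in particular `Δ_μ` is multiplicative on `A_{[μ]}`). -/
theorem prop_StableBialgebras
    {k A : Type} [Field k] [Ring A] [Bialgebra k A]
    {Γ : AddSubmonoid (ℝ × ℝ)} [DecidableEq Γ]
    (𝒜 : Γ → Submodule k A) [DirectSum.Decomposition 𝒜] [SetLike.GradedMonoid 𝒜]
    (hHP : HalfPlane Γ) (hdisc : DiscreteTopology Γ)
    (hconn : GradedConnected 𝒜) (hgr : ComulGraded 𝒜) (hdec : ComulDecomposes 𝒜)
    (μ : WithTop ℝ) :
    ((1 : A) ∈ Asemi 𝒜 μ) ∧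
    (Asemi 𝒜 μ ≤ Aslope 𝒜 μ) ∧
    (∀ a ∈ Asemi 𝒜 μ, ∀ b ∈ Asemi 𝒜 μ, a * b ∈ Asemi 𝒜 μ) ∧
    (∀ a ∈ Asemi 𝒜 μ,
      TensorProduct.map (pSlope 𝒜 μ) (pSlope 𝒜 μ) (Coalgebra.comul (R := k) a) ∈
        LinearMap.range (TensorProduct.map (Asemi 𝒜 μ).subtype (Asemi 𝒜 μ).subtype)) ∧
    (∀ a ∈ Asemi 𝒜 μ, ∀ b ∈ Asemi 𝒜 μ,
      TensorProduct.map (pSlope 𝒜 μ) (pSlope 𝒜 μ) (Coalgebra.comul (R := k) (a * b)) =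
        TensorProduct.map (pSlope 𝒜 μ) (pSlope 𝒜 μ) (Coalgebra.comul (R := k) a) *
        TensorProduct.map (pSlope 𝒜 μ) (pSlope 𝒜 μ) (Coalgebra.comul (R := k) b)) :=
  prop_StableBialgebras_general 𝒜 hHP hgr hdec μ
end
end

section
/- In the affine Grassmannian Gr of G∨, let R_μ be the U∨(𝕂)-orbit of the point L_μ = z^μ G∨(𝕆). Then for each weight μ, the intersection S_μ ∩ R_μ (resp. T_μ ∩ R_μ) equals the orbit of L_μ under U∨₊(𝕂) (resp. U∨₋(𝕂)), where S_μ and T_μ are the orbits through L_μ of N∨₊(𝕂) and N∨₋(𝕂) respectively. -/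
noncomputable section

open MulAction

/-- In the affine Grassmannian `Gr = G∨(𝕂)/G∨(𝕆)` (abstracted here as a
`G`-set `X` with torus-fixed points `L μ`), let `S μ`, `T μ` be the semi-infinite orbits of
`L μ` under `N∨₊(𝕂)`, `N∨₋(𝕂)`, and `R μ` the orbit under `U∨(𝕂)`, where
`U∨(𝕂) = U∨₊(𝕂) ⋈ U∨₋(𝕂)` with `U∨₊(𝕂) ≤ N∨₊(𝕂)` and `U∨₋(𝕂) ≤ N∨₋(𝕂)`.
Then `S μ ∩ R μ` is the `U∨₊(𝕂)`-orbit of `L μ` and `T μ ∩ R μ` is the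
`U∨₋(𝕂)`-orbit of `L μ`. -/
theorem lemma_SmallOrbs
    {G : Type} [Group G] {X : Type} [MulAction G X]
    {P : Type} [AddCommGroup P]
    (L : P → X)
    (Np Nm U Up Um : Subgroup G)
    (hUpNp : Up ≤ Np) (hUmNm : Um ≤ Nm) (hUpU : Up ≤ U) (hUmU : Um ≤ U)
    -- `U∨(𝕂) = U∨₊(𝕂) ⋈ U∨₋(𝕂)`:
    (hZS : ∀ g ∈ U, ∃! p : Up × Um, (p.1 : G) * (p.2 : G) = g)
    (μ : P)
    -- `S_μ ∩ T_μ = {L_μ}`: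
    (hST : orbit Np (L μ) ∩ orbit Nm (L μ) = {L μ}) :
    orbit Np (L μ) ∩ orbit U (L μ) = orbit Up (L μ) ∧
    orbit Nm (L μ) ∩ orbit U (L μ) = orbit Um (L μ) := by
  have key : ∀ (N N' A B : Subgroup G), A ≤ N → B ≤ N' → A ≤ U →
      (∀ g ∈ U, ∃ a ∈ A, ∃ b ∈ B, a * b = g) →
      orbit N (L μ) ∩ orbit N' (L μ) = {L μ} →
      orbit N (L μ) ∩ orbit U (L μ) = orbit A (L μ) := by
    intro N N' A B hAN hBN' hAU hdec hNN'
    ext x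
    constructor
    · rintro ⟨⟨n, hn⟩, ⟨g, hg⟩⟩
      obtain ⟨a, ha, b, hb, hab⟩ := hdec (g : G) g.2
      have hx1 : (n : G) • L μ = x := hn
      have hx2 : (g : G) • L μ = x := hg
      have hy : (a⁻¹ : G) • x ∈ orbit N (L μ) ∩ orbit N' (L μ) := by
        constructor
        · refine ⟨⟨a⁻¹ * (n : G), mul_mem (inv_mem (hAN ha)) n.2⟩, ?_⟩
          show (a⁻¹ * (n : G)) • L μ = a⁻¹ • x
          rw [mul_smul, hx1]
        · refine ⟨⟨b, hBN' hb⟩, ?_⟩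
          show b • L μ = a⁻¹ • x
          rw [← hx2, ← hab, mul_smul, inv_smul_smul]
      rw [hNN'] at hy
      have hx : x = a • L μ := by
        have := hy
        simp only [Set.mem_singleton_iff] at this
        rw [← this, smul_inv_smul]
      exact ⟨⟨a, ha⟩, hx.symm⟩
    · rintro ⟨⟨a, ha⟩, rfl⟩
      exact ⟨⟨⟨a, hAN ha⟩, rfl⟩, ⟨⟨a, hAU ha⟩, rfl⟩⟩
  constructor
  · refine key Np Nm Up Um hUpNp hUmNm hUpU ?_ hST
    intro g hg
    obtain ⟨⟨p, q⟩, hpq, _⟩ := hZS g hg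
    exact ⟨p, p.2, q, q.2, hpq⟩
  · refine key Nm Np Um Up hUmNm hUpNp hUmU ?_ (by rw [Set.inter_comm]; exact hST)
    intro g hg
    obtain ⟨⟨p, q⟩, hpq, _⟩ := hZS g⁻¹ (inv_mem hg)
    refine ⟨(q : G)⁻¹, inv_mem q.2, (p : G)⁻¹, inv_mem p.2, ?_⟩
    rw [← mul_inv_rev, hpq, inv_inv]
end
end

section
/- Every polite basis B of O(N) is compatible with the polytopal filtration: for every convex polytope K in Q⊗ℝ, the subspace S(K), spanned by the weight functions f with Pol(f) ⊆ K, is spanned by B ∩ S(K). -/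
open scoped TensorProduct
open TensorProduct

noncomputable section

namespace MVPaper

variable {k O : Type} [Field k] [Ring O] [Bialgebra k O]
variable {I : Type} [Fintype I] [DecidableEq I] [DecidableEq (I → ℤ)]
variable (𝒪 : (I → ℤ) → Submodule k O) [DirectSum.Decomposition 𝒪]

/-- The height of a weight: the sum of its coordinates on the simple roots. -/
def ht (lam : I → ℤ) : ℤ := ∑ v, lam v

/-- `J_θ : λ ↦ −(ht λ, θ(λ))`, turning the weight grading into a grading by a submonoid of
the right half-plane. -/
def Jmap (θ : I → ℝ) (lam : I → ℤ) : ℝ × ℝ :=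
  (-(ht lam : ℝ), -∑ v, θ v * (lam v : ℝ))

/-- `Π′ = {(r,d) | d < 0 or (d = 0 and r ≥ 0)}`. -/
def PiP : Set (ℝ × ℝ) := {p | p.2 < 0 ∨ (p.2 = 0 ∧ 0 ≤ p.1)}

/-- `Π″ = {(r,d) | d > 0 or (d = 0 and r ≥ 0)}`. -/
def PiPP : Set (ℝ × ℝ) := {p | 0 < p.2 ∨ (p.2 = 0 ∧ 0 ≤ p.1)}

/-- The filtration `θF′_α O`, spanned by the homogeneous `f` with `J_θ(L(f)) ⊆ α + Π′`. -/
def Fprime (θ : I → ℝ) (α : ℝ × ℝ) : Submodule k O :=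
  Submodule.span k {f : O | ∃ lam : I → ℤ, f ∈ 𝒪 lam ∧
    ∀ μ ∈ Lset 𝒪 f, Jmap θ μ - α ∈ PiP}

/-- The filtration `θF″_β O`, spanned by the homogeneous `f` with `J_θ(R(f)) ⊆ β + Π″`. -/
def Fdprime (θ : I → ℝ) (β : ℝ × ℝ) : Submodule k O :=
  Submodule.span k {f : O | ∃ lam : I → ℤ, f ∈ 𝒪 lam ∧
    ∀ μ ∈ Rset 𝒪 f, Jmap θ μ - β ∈ PiPP}

/-- `Pol(f)`: the convex hull in `Q ⊗ ℝ` of the set `L(f)` of weights of the left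
`N`-submodule generated by `f`. -/
def PolO (f : O) : Set (I → ℝ) :=
  convexHull ℝ {x : I → ℝ | ∃ μ ∈ Lset 𝒪 f, ∀ v, x v = (μ v : ℝ)}

/-- `Pol^∧_θ(f)` for `f` of weight `lam`: the region between the upper rim of `Pol_θ(f)` and
the segment from `0` to `J_θ(lam)`. -/
def PolWedgeTheta (θ : I → ℝ) (f : O) (lam : I → ℤ) : Set (ℝ × ℝ) :=
  {p | (∃ t ∈ Set.Icc (0 : ℝ) 1,
          p.1 = t * (Jmap θ lam).1 ∧ t * (Jmap θ lam).2 ≤ p.2) ∧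
       (∃ q ∈ convexHull ℝ ((Jmap θ) '' Lset 𝒪 f), q.1 = p.1 ∧ p.2 ≤ q.2)}

/-- A basis `B` of `O = O(N)` is *polite* if its elements are weight vectors, it contains
the powers `ζ_iⁿ`, and for every stability parameter `θ` it is compatible with the
filtrations `θF′`, `θF″` and with the splitting isomorphisms `Δ̄′`, `Δ̄″` (stated here as:
the extreme homogeneous component of the coproduct of a basis element is a pure tensor of
basis elements). -/
def IsPolite (ζ : I → O) (B : Set O) : Prop :=
  Submodule.span k B = ⊤ ∧
  LinearIndependent k (fun b : B => (b : O)) ∧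
  (∀ f ∈ B, ∃ lam : I → ℤ, (∀ v, lam v ≤ 0) ∧ f ∈ 𝒪 lam) ∧
  (∀ (i : I) (n : ℕ), ζ i ^ n ∈ B) ∧
  (∀ (θ : I → ℝ) (α : ℝ × ℝ),
    Fprime 𝒪 θ α = Submodule.span k (B ∩ (Fprime 𝒪 θ α : Set O))) ∧
  (∀ (θ : I → ℝ) (β : ℝ × ℝ),
    Fdprime 𝒪 θ β = Submodule.span k (B ∩ (Fdprime 𝒪 θ β : Set O))) ∧
  (∀ θ : I → ℝ, ∀ f ∈ B, ∀ lam : I → ℤ, f ∈ 𝒪 lam → ∀ μ ∈ Lset 𝒪 f,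
    (∀ μ' ∈ Lset 𝒪 f, Jmap θ μ' - Jmap θ μ ∈ PiP) →
    ∃ b₁ ∈ B, ∃ b₂ ∈ B,
      projT 𝒪 μ (lam - μ) (Coalgebra.comul (R := k) f) = b₁ ⊗ₜ[k] b₂) ∧
  (∀ θ : I → ℝ, ∀ f ∈ B, ∀ lam : I → ℤ, f ∈ 𝒪 lam → ∀ μ ∈ Rset 𝒪 f,
    (∀ μ' ∈ Rset 𝒪 f, Jmap θ μ' - Jmap θ μ ∈ PiPP) →
    ∃ b₁ ∈ B, ∃ b₂ ∈ B,
      projT 𝒪 (lam - μ) μ (Coalgebra.comul (R := k) f) = b₁ ⊗ₜ[k] b₂)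

end MVPaper

/-!
Write `K` as the intersection of the closed half-spaces `{x | m ≤ θ x}` containing it. For a
weight `μ` of nonpositive height, `J_θ(μ) ∈ (0, -m) + Π′` says exactly `m ≤ θ μ`, so a weight
vector `f` with `Pol(f) ⊆ K` lies in every filtration step `θF′_{(0,-m)}` attached to such a
half-space. Compatibility of `B` with these filtrations puts every basis vector in the support
of `f` in the same steps; these basis vectors have the weight of `f`, and their `L`-sets lie in
every half-space containing `K`, hence in `K`.
-/

theorem Module.Basis.mem_span_inter_iff {R M : Type*} [Semiring R] [AddCommMonoid M]
    [Module R M] {B : Set M} (b : Module.Basis B R M) (hb : ∀ i, b i = i) (s : Set M) (x : M) :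
    x ∈ Submodule.span R (B ∩ s) ↔ ∀ i ∈ (b.repr x).support, (i : M) ∈ s := by
  have himage : B ∩ s = b '' (Subtype.val ⁻¹' s) := by
    ext y
    constructor
    · rintro ⟨hyB, hys⟩
      exact ⟨⟨y, hyB⟩, hys, hb _⟩
    · rintro ⟨i, his, rfl⟩
      exact hb i ▸ ⟨i.2, his⟩
  rw [himage, b.mem_span_image]
  exact Iff.rfl

theorem Convex.mem_of_forall_le_sum_mul {I : Type} [Fintype I] {K : Set (I → ℝ)}
    (hKc : Convex ℝ K) (hKcl : IsClosed K) {x : I → ℝ}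
    (h : ∀ (θ : I → ℝ) (m : ℝ), (∀ y ∈ K, m ≤ ∑ v, θ v * y v) → m ≤ ∑ v, θ v * x v) :
    x ∈ K := by
  classical
  by_contra hx
  obtain ⟨g, u, hgx, hgK⟩ := geometric_hahn_banach_point_closed hKc hKcl hx
  have hg : ∀ z : I → ℝ, g z = ∑ v, g (fun j => if v = j then 1 else 0) * z v := fun z => by
    simpa [mul_comm] using LinearMap.pi_apply_eq_sum_univ (g : (I → ℝ) →ₗ[ℝ] ℝ) z
  refine hgx.not_ge ?_
  rw [hg]
  exact h _ u fun y hy => (hg y ▸ hgK y hy).le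

namespace MVPaper

section Graded

variable {k A : Type} [Field k] [Ring A] [Bialgebra k A]
variable {ι : Type} [DecidableEq ι]
variable (𝒜 : ι → Submodule k A) [DirectSum.Decomposition 𝒜]

theorem proj_apply_of_mem_s17 {γ : ι} {a : A} (h : a ∈ 𝒜 γ) : proj 𝒜 γ a = a :=
  DirectSum.decompose_of_mem_same 𝒜 h

theorem proj_apply_of_mem_of_ne {γ δ : ι} (hne : δ ≠ γ) {a : A} (h : a ∈ 𝒜 δ) :
    proj 𝒜 γ a = 0 := by
  simp [proj, DirectSum.decomposeLinearEquiv, DirectSum.component, DFinsupp.lapply,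
    DirectSum.decompose_of_mem_ne 𝒜 h hne]

theorem proj_apply_mem (γ : ι) (a : A) : proj 𝒜 γ a ∈ 𝒜 γ :=
  SetLike.coe_mem _

theorem proj_eq_zero_of_eq_bot {γ : ι} (h : 𝒜 γ = ⊥) : proj 𝒜 γ = 0 := by
  ext a
  simpa [h] using proj_apply_mem 𝒜 γ a

theorem Lset_add_subset (a b : A) : Lset 𝒜 (a + b) ⊆ Lset 𝒜 a ∪ Lset 𝒜 b := by
  rintro β ⟨γ, hne⟩
  by_contra! h
  simp only [Set.mem_union, Lset, Set.mem_ofPred_eq, not_or, not_exists, not_not] at h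
  exact hne (by rw [map_add, map_add, h.1 γ, h.2 γ, add_zero])

theorem Lset_smul_subset (c : k) (a : A) : Lset 𝒜 (c • a) ⊆ Lset 𝒜 a := by
  rintro β ⟨γ, hne⟩
  exact ⟨γ, fun h => hne (by rw [map_smul, map_smul, h, smul_zero])⟩

theorem Lset_zero : Lset 𝒜 (0 : A) = ∅ := by
  simp [Lset]

theorem ne_bot_of_mem_Lset {a : A} {β : ι} (h : β ∈ Lset 𝒜 a) : 𝒜 β ≠ ⊥ := by
  intro hβ
  obtain ⟨γ, hne⟩ := h
  exact hne (by simp [projT, proj_eq_zero_of_eq_bot 𝒜 hβ, TensorProduct.map_zero_left])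

def LsetWithin (S : Set ι) : Submodule k A where
  carrier := {a | Lset 𝒜 a ⊆ S}
  add_mem' ha hb := (Lset_add_subset 𝒜 _ _).trans (Set.union_subset ha hb)
  zero_mem' := by simp [Lset_zero]
  smul_mem' c _ ha := (Lset_smul_subset 𝒜 c _).trans ha

theorem mem_LsetWithin {S : Set ι} {a : A} : a ∈ LsetWithin 𝒜 S ↔ Lset 𝒜 a ⊆ S := Iff.rfl

theorem mem_span_inter_of_mem {B : Set A} (hspan : Submodule.span k B = ⊤)
    (hhom : ∀ b ∈ B, ∃ μ, b ∈ 𝒜 μ) {γ : ι} {a : A} (ha : a ∈ 𝒜 γ) :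
    a ∈ Submodule.span k (B ∩ 𝒜 γ) := by
  have hproj : Submodule.span k (proj 𝒜 γ '' B) ≤ Submodule.span k (B ∩ 𝒜 γ) := by
    refine Submodule.span_le.2 ?_
    rintro _ ⟨b, hb, rfl⟩
    obtain ⟨μ, hμ⟩ := hhom b hb
    by_cases hμγ : μ = γ
    · subst hμγ
      rw [proj_apply_of_mem_s17 𝒜 hμ]
      exact Submodule.subset_span ⟨hb, hμ⟩
    · rw [proj_apply_of_mem_of_ne 𝒜 hμγ hμ]
      exact Submodule.zero_mem _
  rw [← proj_apply_of_mem_s17 𝒜 ha]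
  refine hproj ?_
  rw [Submodule.span_image, hspan]
  exact Submodule.mem_map_of_mem Submodule.mem_top

end Graded

theorem Jmap_sub_mem_PiP_iff {I : Type} [Fintype I] {θ : I → ℝ} {m : ℝ} {μ : I → ℤ}
    (hμ : ht μ ≤ 0) :
    Jmap θ μ - (0, -m) ∈ PiP ↔ m ≤ ∑ v, θ v * (μ v : ℝ) := by
  have hμ' : ((ht μ : ℤ) : ℝ) ≤ 0 := by exact_mod_cast hμ
  simp only [PiP, Jmap, Set.mem_ofPred_eq, Prod.mk_sub_mk]
  constructor
  · rintro (h | ⟨h, -⟩) <;> linarith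
  · intro h
    rcases h.lt_or_eq with h | h
    · left; linarith
    · right; constructor <;> linarith

section Weights

variable {k O : Type} [Field k] [Ring O] [Bialgebra k O]
variable {I : Type} [DecidableEq (I → ℤ)]
variable (𝒪 : (I → ℤ) → Submodule k O) [DirectSum.Decomposition 𝒪]

theorem PolO_subset_iff {f : O} {K : Set (I → ℝ)} (hK : Convex ℝ K) :
    PolO 𝒪 f ⊆ K ↔ ∀ μ ∈ Lset 𝒪 f, (fun v => (μ v : ℝ)) ∈ K := by
  refine ⟨fun h μ hμ => h (subset_convexHull ℝ _ ⟨μ, hμ, fun _ => rfl⟩), fun h => ?_⟩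
  refine convexHull_min ?_ hK
  rintro x ⟨μ, hμ, hx⟩
  exact funext hx ▸ h μ hμ

variable [Fintype I]

theorem ht_nonpos_of_mem_Lset (hneg : ∀ lam : I → ℤ, 𝒪 lam ≠ ⊥ → ∀ v, lam v ≤ 0) {f : O}
    {μ : I → ℤ} (hμ : μ ∈ Lset 𝒪 f) : ht μ ≤ 0 :=
  Finset.sum_nonpos fun v _ => hneg μ (ne_bot_of_mem_Lset 𝒪 hμ) v

theorem Fprime_le_LsetWithin (θ : I → ℝ) (α : ℝ × ℝ) :
    Fprime 𝒪 θ α ≤ LsetWithin 𝒪 {μ | Jmap θ μ - α ∈ PiP} :=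
  Submodule.span_le.2 fun _ ⟨_, _, hf⟩ => hf

theorem mem_Fprime_iff_forall_le (hneg : ∀ lam : I → ℤ, 𝒪 lam ≠ ⊥ → ∀ v, lam v ≤ 0)
    {θ : I → ℝ} {m : ℝ} {lam : I → ℤ} {f : O} (hf : f ∈ 𝒪 lam) :
    f ∈ Fprime 𝒪 θ (0, -m) ↔ ∀ μ ∈ Lset 𝒪 f, m ≤ ∑ v, θ v * (μ v : ℝ) := by
  refine ⟨fun h μ hμ => ?_, fun h => Submodule.subset_span ⟨lam, hf, fun μ hμ => ?_⟩⟩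
  · exact (Jmap_sub_mem_PiP_iff (ht_nonpos_of_mem_Lset 𝒪 hneg hμ)).1
      ((mem_LsetWithin 𝒪).1 (Fprime_le_LsetWithin 𝒪 θ _ h) hμ)
  · exact (Jmap_sub_mem_PiP_iff (ht_nonpos_of_mem_Lset 𝒪 hneg hμ)).2 (h μ hμ)

end Weights

end MVPaper

open MVPaper in
theorem prop_ConvComp_general
    {k O : Type} [Field k] [Ring O] [Bialgebra k O]
    {I : Type} [Fintype I] [DecidableEq (I → ℤ)]
    (𝒪 : (I → ℤ) → Submodule k O) [DirectSum.Decomposition 𝒪]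
    (hneg : ∀ lam : I → ℤ, 𝒪 lam ≠ ⊥ → ∀ v, lam v ≤ 0)
    (ζ : I → O)
    (B : Set O) (hB : IsPolite 𝒪 ζ B)
    (K : Set (I → ℝ)) (hK : ∃ F : Finset (I → ℝ), K = convexHull ℝ (F : Set (I → ℝ))) :
    Submodule.span k {f : O | ∃ lam : I → ℤ, f ∈ 𝒪 lam ∧ PolO 𝒪 f ⊆ K} =
    Submodule.span k (B ∩
      (Submodule.span k {f : O | ∃ lam : I → ℤ, f ∈ 𝒪 lam ∧ PolO 𝒪 f ⊆ K} : Set O)) := by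
  obtain ⟨F, rfl⟩ := hK
  obtain ⟨hspan, hli, hhom, -, hF', -⟩ := hB
  have hKc := convex_convexHull ℝ (F : Set (I → ℝ))
  have hKcl := F.finite_toSet.isClosed_convexHull ℝ
  let b : Module.Basis B k O := .mk hli (by rw [Subtype.range_coe, hspan])
  have hb : ∀ i, b i = i := Module.Basis.mk_apply hli _
  refine le_antisymm (Submodule.span_le.2 ?_) (Submodule.span_le.2 fun _ h => h.2)
  rintro f ⟨lam, hf, hfK⟩
  rw [SetLike.mem_coe, b.mem_span_inter_iff hb]
  intro i hi
  have hi_lam : (i : O) ∈ 𝒪 lam := (b.mem_span_inter_iff hb _ f).1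
    (mem_span_inter_of_mem 𝒪 hspan (fun g hg => (hhom g hg).imp fun _ h => h.2) hf) i hi
  have hi_F : ∀ θ m, f ∈ Fprime 𝒪 θ (0, -m) → (i : O) ∈ Fprime 𝒪 θ (0, -m) := fun θ m h =>
    (b.mem_span_inter_iff hb _ f).1 (hF' θ _ ▸ h) i hi
  refine Submodule.subset_span ⟨lam, hi_lam, (PolO_subset_iff 𝒪 hKc).2 fun μ hμ =>
    hKc.mem_of_forall_le_sum_mul hKcl fun θ m hKm => ?_⟩
  refine (mem_Fprime_iff_forall_le 𝒪 hneg hi_lam).1 (hi_F θ m ?_) μ hμ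
  exact (mem_Fprime_iff_forall_le 𝒪 hneg hf).2 fun ν hν =>
    hKm _ ((PolO_subset_iff 𝒪 hKc).1 hfK ν hν)

open MVPaper in
/-- Every polite basis `B` of `O(N)` is compatible with the polytopal
filtration: for every convex polytope `K` in `Q ⊗ ℝ`, the subspace `S(K)` spanned by the
weight functions `f` with `Pol(f) ⊆ K` is spanned by `B ∩ S(K)`. -/
theorem prop_ConvComp
    {k O : Type} [Field k] [Ring O] [Bialgebra k O]
    {I : Type} [Fintype I] [DecidableEq I] [DecidableEq (I → ℤ)]
    (𝒪 : (I → ℤ) → Submodule k O) [DirectSum.Decomposition 𝒪] [SetLike.GradedMonoid 𝒪]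
    (hconn : GradedConnected 𝒪) (hgr : ComulGraded 𝒪) (hdec : ComulDecomposes 𝒪)
    (hneg : ∀ lam : I → ℤ, 𝒪 lam ≠ ⊥ → ∀ v, lam v ≤ 0)
    (ζ : I → O) (hζ : ∀ i, ζ i ∈ 𝒪 (fun v => if v = i then -1 else 0))
    (B : Set O) (hB : IsPolite 𝒪 ζ B)
    (K : Set (I → ℝ)) (hK : ∃ F : Finset (I → ℝ), K = convexHull ℝ (F : Set (I → ℝ))) :
    Submodule.span k {f : O | ∃ lam : I → ℤ, f ∈ 𝒪 lam ∧ PolO 𝒪 f ⊆ K} =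
    Submodule.span k (B ∩
      (Submodule.span k {f : O | ∃ lam : I → ℤ, f ∈ 𝒪 lam ∧ PolO 𝒪 f ⊆ K} : Set O)) :=
  prop_ConvComp_general 𝒪 hneg ζ B hB K hK
end
end
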